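/- Let G be a weighted graph, Ω a finite connected subset, and Γ a subgroup of D-automorphisms of Ω acting finitely. Then the Dirichlet Cheeger constant of Ω equals that of the quotient graph: h_{μ,ν}(Ω) = h_{μ,ν}(Ω/Γ). -/
import Mathlib


open scoped BigOperators

namespace PGraph

variable {V : Type*}

/-- The `p`-Dirichlet energy `E_p(u) = (1/2) ∑_{x,y} μ_{xy} |u(y)-u(x)|^p`. -/
noncomputable def energy (μ : V → V → ℝ) (p : ℝ) (u : V → ℝ) : ℝ :=
  (1 / 2) * ∑ᶠ x : V, ∑ᶠ y : V, μ x y * |u y - u x| ^ p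

/-- `‖u‖_{p,Ω}^p = ∑_{x∈Ω} |u(x)|^p ν_x`. -/
noncomputable def pnormP (ν : V → ℝ) (Ω : Finset V) (p : ℝ) (u : V → ℝ) : ℝ :=
  ∑ x ∈ Ω, |u x| ^ p * ν x

/-- The `p`-Laplacian `Δ_p u(x) = (1/ν_x) ∑_y μ_{xy} |u(y)-u(x)|^{p-2}(u(y)-u(x))`. -/
noncomputable def plap (μ : V → V → ℝ) (ν : V → ℝ) (p : ℝ) (u : V → ℝ) (x : V) : ℝ :=
  (1 / ν x) * ∑ᶠ y : V, μ x y * (|u y - u x| ^ (p - 2) * (u y - u x))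

/-- `u` is an eigenfunction of the Dirichlet `p`-Laplacian on `Ω` with eigenvalue `lam`:
`u` vanishes outside `Ω` (zero extension), `u ≢ 0` on `Ω`, and
`Δ_p u = -lam |u|^{p-2} u` on `Ω`. -/
def IsDirEigenfun (μ : V → V → ℝ) (ν : V → ℝ) (Ω : Finset V) (p : ℝ)
    (u : V → ℝ) (lam : ℝ) : Prop :=
  (∀ x, x ∉ Ω → u x = 0) ∧ (∃ x ∈ Ω, u x ≠ 0) ∧
    ∀ x ∈ Ω, plap μ ν p u x = -lam * (|u x| ^ (p - 2) * u x)

/-- The first Dirichlet eigenvalue, via the Rayleigh quotient characterization. -/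
noncomputable def lam1 (μ : V → V → ℝ) (ν : V → ℝ) (Ω : Finset V) (p : ℝ) : ℝ :=
  sInf {t : ℝ | ∃ u : V → ℝ, (∀ x, x ∉ Ω → u x = 0) ∧ (∃ x ∈ Ω, u x ≠ 0) ∧
    t = energy μ p u / pnormP ν Ω p u}

/-- The maximum Dirichlet eigenvalue, via the Rayleigh quotient characterization. -/
noncomputable def lamMax (μ : V → V → ℝ) (ν : V → ℝ) (Ω : Finset V) (p : ℝ) : ℝ :=
  sSup {t : ℝ | ∃ u : V → ℝ, (∀ x, x ∉ Ω → u x = 0) ∧ (∃ x ∈ Ω, u x ≠ 0) ∧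
    t = energy μ p u / pnormP ν Ω p u}

/-- The induced subgraph on `Ω` is connected. -/
def ConnOn (μ : V → V → ℝ) (Ω : Finset V) : Prop :=
  ∀ x ∈ Ω, ∀ y ∈ Ω,
    Relation.ReflTransGen (fun a b => a ∈ Ω ∧ b ∈ Ω ∧ 0 < μ a b) x y

/-- The induced subgraph on `Ω` is bipartite with parts `V₁, V₂`. -/
def BipartiteOn (μ : V → V → ℝ) (Ω : Finset V) : Prop :=
  ∃ V₁ V₂ : Set V, (Ω : Set V) = V₁ ∪ V₂ ∧ Disjoint V₁ V₂ ∧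
    ∀ x ∈ Ω, ∀ y ∈ Ω, 0 < μ x y → ((x ∈ V₁ ∧ y ∈ V₂) ∨ (x ∈ V₂ ∧ y ∈ V₁))

/-- A locally finite weighted graph: symmetric nonnegative edge weights without
self-loops, finitely many neighbours at each vertex, positive vertex weights. -/
structure IsWeightedGraph (μ : V → V → ℝ) (ν : V → ℝ) : Prop where
  symm : ∀ x y, μ x y = μ y x
  nonneg : ∀ x y, 0 ≤ μ x y
  loopless : ∀ x, μ x x = 0
  locFin : ∀ x, (Function.support (μ x)).Finite
  nuPos : ∀ x, 0 < ν x

/-- The edge boundary measure `|∂U|_μ` of a finite vertex set `U`. -/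
noncomputable def bdryWt (μ : V → V → ℝ) (U : Finset V) : ℝ :=
  ∑ x ∈ U, ∑ᶠ y ∈ {z : V | z ∉ U}, μ x y

/-- The Dirichlet Cheeger constant `h_{μ,ν}(Ω) = min_{∅ ≠ U ⊆ Ω} |∂U|_μ / |U|_ν`. -/
noncomputable def cheeger (μ : V → V → ℝ) (ν : V → ℝ) (Ω : Finset V) : ℝ :=
  sInf {t : ℝ | ∃ U : Finset V, U ⊆ Ω ∧ U.Nonempty ∧
    t = bdryWt μ U / ∑ x ∈ U, ν x}

end PGraph

namespace PGraph

variable {V : Type*} (G : Type*) [Group G] [MulAction G V]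

/-- The orbit of `x` in the quotient `V / Γ`. -/
def qmk (x : V) : Quotient (MulAction.orbitRel G V) :=
  Quotient.mk (MulAction.orbitRel G V) x

/-- `Γ` acts on `Ω` by Dirichlet automorphisms: each group element preserves `Ω`, the
vertex weights and edge weights on `Ω`, and the total edge weight from each vertex of `Ω`
to the complement of `Ω`. -/
def IsDAutAction (μ : V → V → ℝ) (ν : V → ℝ) (Ω : Finset V) : Prop :=
  (∀ (g : G), ∀ x ∈ Ω, g • x ∈ Ω) ∧
  (∀ (g : G), ∀ x ∈ Ω, ν (g • x) = ν x) ∧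
  (∀ (g : G), ∀ x ∈ Ω, ∀ y ∈ Ω, μ (g • x) (g • y) = μ x y) ∧
  (∀ (g : G), ∀ x ∈ Ω,
    (∑ᶠ y ∈ {z : V | z ∉ Ω}, μ (g • x) y) = ∑ᶠ y ∈ {z : V | z ∉ Ω}, μ x y)

/-- Vertex weights of the quotient graph: an orbit `[x]` of `Ω` gets the total `ν`-weight
of the orbit; the extra point `none` represents the collapsed complement of `Ω`. -/
noncomputable def quotNu (ν : V → ℝ) (Ω : Finset V) :
    Option (Quotient (MulAction.orbitRel G V)) → ℝ
  | none => 1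
  | some q => ∑ᶠ x ∈ {z : V | z ∈ Ω ∧ qmk G z = q}, ν x

open Classical in
/-- Edge weights of the quotient graph: `μ_{[x][y]} = ∑_{x₁∈[x], y₁∈[y]} μ_{x₁y₁}` for
distinct orbits (no self-loops), and the boundary point `none` carries the total edge
weight to the complement of `Ω`. -/
noncomputable def quotMu (μ : V → V → ℝ) (Ω : Finset V) :
    Option (Quotient (MulAction.orbitRel G V)) →
      Option (Quotient (MulAction.orbitRel G V)) → ℝ
  | some q, some q' =>
      if q = q' then 0
      else ∑ᶠ x ∈ {z : V | z ∈ Ω ∧ qmk G z = q},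
        ∑ᶠ y ∈ {z : V | z ∈ Ω ∧ qmk G z = q'}, μ x y
  | some q, none =>
      ∑ᶠ x ∈ {z : V | z ∈ Ω ∧ qmk G z = q}, ∑ᶠ y ∈ {z : V | z ∉ Ω}, μ x y
  | none, some q =>
      ∑ᶠ x ∈ {z : V | z ∈ Ω ∧ qmk G z = q}, ∑ᶠ y ∈ {z : V | z ∉ Ω}, μ x y
  | none, none => 0

open Classical in
/-- The image of `Ω` in the quotient graph: the set of orbits of points of `Ω`. -/
noncomputable def quotOmega (Ω : Finset V) :
    Finset (Option (Quotient (MulAction.orbitRel G V))) :=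
  Ω.image fun x => some (qmk G x)

section Aux
open Classical

variable {V : Type*}

lemma finsum_mem_setOf_eq_filter_sum {α : Type*} (f : α → ℝ) (p : α → Prop) (B : Finset α)
    (h : Function.support f ⊆ ↑B) :
    ∑ᶠ y ∈ {z : α | p z}, f y = ∑ y ∈ B.filter p, f y := by
  apply finsum_mem_eq_sum_of_inter_support_eq
  ext x
  simp only [Set.mem_inter_iff, Set.mem_setOf_eq, Function.mem_support, Finset.coe_filter]
  constructor
  · rintro ⟨hp, hf⟩; exact ⟨⟨h hf, hp⟩, hf⟩
  · rintro ⟨⟨_, hp⟩, hf⟩; exact ⟨hp, hf⟩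

/-- support version -/
lemma finsum_mem_eq_ite_sum {α : Type*} (f : α → ℝ) (p : α → Prop) (B : Finset α)
    (h : Function.support f ⊆ ↑B) :
    ∑ᶠ y ∈ {z : α | p z}, f y = ∑ y ∈ B, if p y then f y else 0 := by
  rw [finsum_mem_setOf_eq_filter_sum f p B h, Finset.sum_filter]

/-- subset version -/
lemma finsum_mem_eq_ite_sum' {α : Type*} (f : α → ℝ) (p : α → Prop) (B : Finset α)
    (h : ∀ z, p z → z ∈ B) :
    ∑ᶠ y ∈ {z : α | p z}, f y = ∑ y ∈ B, if p y then f y else 0 := by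
  have hset : {z : α | p z} = ↑(B.filter p) := by
    ext z
    simp only [Set.mem_setOf_eq, Finset.coe_filter]
    exact ⟨fun hz => ⟨h z hz, hz⟩, fun hz => hz.2⟩
  rw [hset, finsum_mem_coe_finset, Finset.sum_filter]

/-- total edge weight from `x` to the complement of `Ω`. -/
noncomputable def outw (μ : V → V → ℝ) (Ω : Finset V) (x : V) : ℝ :=
  ∑ᶠ y ∈ {z : V | z ∉ Ω}, μ x y

/-- interior cross weight -/
noncomputable def crossw (μ : V → V → ℝ) (Ω A : Finset V) : ℝ :=
  ∑ x ∈ Ω, ∑ y ∈ Ω, if x ∈ A ∧ y ∉ A then μ x y else 0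

lemma outw_nonneg {μ : V → V → ℝ} {ν : V → ℝ} (hG : IsWeightedGraph μ ν) (Ω : Finset V)
    (x : V) : 0 ≤ outw μ Ω x := by
  rw [outw, finsum_mem_eq_ite_sum (μ x) _ (hG.locFin x).toFinset
    (by simp [Set.Finite.coe_toFinset])]
  refine Finset.sum_nonneg fun y _ => ?_
  by_cases hy : y ∉ Ω <;> simp [hy, hG.nonneg x y]

lemma crossw_nonneg {μ : V → V → ℝ} {ν : V → ℝ} (hG : IsWeightedGraph μ ν) (Ω A : Finset V) :
    0 ≤ crossw μ Ω A := by
  refine Finset.sum_nonneg fun x _ => Finset.sum_nonneg fun y _ => ?_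
  by_cases hc : x ∈ A ∧ y ∉ A <;> simp [hc, hG.nonneg x y]

/-- per-vertex boundary decomposition -/
lemma bdry_eq' {μ : V → V → ℝ} {ν : V → ℝ} (hG : IsWeightedGraph μ ν) {U Ω : Finset V}
    (hUΩ : U ⊆ Ω) :
    bdryWt μ U = ∑ x ∈ U, (outw μ Ω x + ∑ y ∈ Ω, if y ∈ U then 0 else μ x y) := by
  unfold bdryWt
  refine Finset.sum_congr rfl fun x _ => ?_
  have hsupp : Function.support (μ x) ⊆ ↑((hG.locFin x).toFinset ∪ Ω) := by
    intro y hy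
    simp only [Finset.coe_union, Set.Finite.coe_toFinset, Set.mem_union]
    exact Or.inl hy
  rw [finsum_mem_eq_ite_sum (μ x) _ _ hsupp, outw, finsum_mem_eq_ite_sum (μ x) _ _ hsupp]
  have hΩ : ∑ y ∈ Ω, (if y ∈ U then 0 else μ x y)
      = ∑ y ∈ (hG.locFin x).toFinset ∪ Ω,
          (if y ∈ Ω then (if y ∈ U then 0 else μ x y) else 0) := by
    refine (Finset.sum_congr rfl fun y hy => ?_).trans
      (Finset.sum_subset Finset.subset_union_right fun y _ hy => by simp [hy])
    simp [hy]
  rw [hΩ, ← Finset.sum_add_distrib]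
  refine Finset.sum_congr rfl fun y _ => ?_
  by_cases hyΩ : y ∈ Ω <;> by_cases hyU : y ∈ U
  · simp [hyΩ, hyU]
  · simp [hyΩ, hyU]
  · exact absurd (hUΩ hyU) hyΩ
  · simp [hyΩ, hyU]

end Aux
section Aux2
open Classical

variable {V : Type*}

lemma sum_eq_sum_ite_over {α : Type*} {U Ω : Finset α} (hUΩ : U ⊆ Ω) (f : α → ℝ) :
    ∑ x ∈ U, f x = ∑ x ∈ Ω, if x ∈ U then f x else 0 := by
  refine (Finset.sum_congr rfl fun x hx => by simp [hx]).trans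
    (Finset.sum_subset hUΩ fun x _ hx => by simp [hx])

lemma bdry_eq {μ : V → V → ℝ} {ν : V → ℝ} (hG : IsWeightedGraph μ ν) {U Ω : Finset V}
    (hUΩ : U ⊆ Ω) :
    bdryWt μ U = ∑ x ∈ U, outw μ Ω x + crossw μ Ω U := by
  rw [bdry_eq' hG hUΩ, Finset.sum_add_distrib]
  congr 1
  rw [sum_eq_sum_ite_over hUΩ (fun x => ∑ y ∈ Ω, if y ∈ U then 0 else μ x y), crossw]
  refine Finset.sum_congr rfl fun x _ => ?_
  by_cases hx : x ∈ U
  · simp only [hx, if_true]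
    refine Finset.sum_congr rfl fun y _ => ?_
    by_cases hy : y ∈ U <;> simp [hx, hy]
  · simp [hx]

lemma bdry_nonneg {μ : V → V → ℝ} {ν : V → ℝ} (hG : IsWeightedGraph μ ν) {U Ω : Finset V}
    (hUΩ : U ⊆ Ω) : 0 ≤ bdryWt μ U := by
  rw [bdry_eq hG hUΩ]
  have h1 : 0 ≤ ∑ x ∈ U, outw μ Ω x := Finset.sum_nonneg fun x _ => outw_nonneg hG Ω x
  have h2 := crossw_nonneg hG Ω U
  linarith

lemma crossw_submod {μ : V → V → ℝ} {ν : V → ℝ} (hG : IsWeightedGraph μ ν) (Ω A B : Finset V) :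
    crossw μ Ω (A ∪ B) + crossw μ Ω (A ∩ B) ≤ crossw μ Ω A + crossw μ Ω B := by
  unfold crossw
  rw [← Finset.sum_add_distrib, ← Finset.sum_add_distrib]
  refine Finset.sum_le_sum fun x _ => ?_
  rw [← Finset.sum_add_distrib, ← Finset.sum_add_distrib]
  refine Finset.sum_le_sum fun y _ => ?_
  have hμ := hG.nonneg x y
  by_cases h1 : x ∈ A <;> by_cases h2 : x ∈ B <;> by_cases h3 : y ∈ A <;> by_cases h4 : y ∈ B <;>
    simp [Finset.mem_union, Finset.mem_inter, h1, h2, h3, h4] <;> linarith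

end Aux2
section Aux3
open Classical

variable {V : Type*} {G : Type*} [Group G] [MulAction G V]

lemma image_smul_omega {μ : V → V → ℝ} {ν : V → ℝ} {Ω : Finset V}
    (hact : IsDAutAction G μ ν Ω) (g : G) : Ω.image (g • ·) = Ω := by
  apply Finset.eq_of_subset_of_card_le
  · intro y hy
    obtain ⟨x, hx, rfl⟩ := Finset.mem_image.mp hy
    exact hact.1 g x hx
  · rw [Finset.card_image_of_injective Ω (MulAction.injective g)]

lemma smul_image_subset {μ : V → V → ℝ} {ν : V → ℝ} {Ω : Finset V}
    (hact : IsDAutAction G μ ν Ω) {U : Finset V} (hUΩ : U ⊆ Ω) (g : G) :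
    U.image (g • ·) ⊆ Ω := by
  intro y hy
  obtain ⟨x, hx, rfl⟩ := Finset.mem_image.mp hy
  exact hact.1 g x (hUΩ hx)

lemma nusum_smul {μ : V → V → ℝ} {ν : V → ℝ} {Ω : Finset V}
    (hact : IsDAutAction G μ ν Ω) {U : Finset V} (hUΩ : U ⊆ Ω) (g : G) :
    ∑ x ∈ U.image (g • ·), ν x = ∑ x ∈ U, ν x := by
  rw [Finset.sum_image (fun x _ y _ h => MulAction.injective g h)]
  exact Finset.sum_congr rfl fun x hx => hact.2.1 g x (hUΩ hx)

lemma bdry_smul {μ : V → V → ℝ} {ν : V → ℝ} {Ω : Finset V} (hG : IsWeightedGraph μ ν)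
    (hact : IsDAutAction G μ ν Ω) {U : Finset V} (hUΩ : U ⊆ Ω) (g : G) :
    bdryWt μ (U.image (g • ·)) = bdryWt μ U := by
  rw [bdry_eq' hG (smul_image_subset hact hUΩ g), bdry_eq' hG hUΩ,
    Finset.sum_image (fun x _ y _ h => MulAction.injective g h)]
  refine Finset.sum_congr rfl fun u hu => ?_
  have huΩ : u ∈ Ω := hUΩ hu
  congr 1
  · exact hact.2.2.2 g u huΩ
  · have h5 : ∑ y ∈ Ω.image (g • ·), (if y ∈ U.image (g • ·) then 0 else μ (g • u) y)
        = ∑ y ∈ Ω, (if g • y ∈ U.image (g • ·) then 0 else μ (g • u) (g • y)) :=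
      Finset.sum_image (fun x _ y _ h => MulAction.injective g h)
    rw [image_smul_omega hact g] at h5
    rw [h5]
    refine Finset.sum_congr rfl fun y hy => ?_
    by_cases hyU : y ∈ U
    · have : g • y ∈ U.image (g • ·) := Finset.mem_image_of_mem _ hyU
      simp [hyU, this]
    · have : g • y ∉ U.image (g • ·) := by
        intro hmem
        obtain ⟨z, hz, hzy⟩ := Finset.mem_image.mp hmem
        exact hyU ((MulAction.injective g hzy) ▸ hz)
      simp only [hyU, this, if_false]
      exact hact.2.2.1 g u huΩ y hy

end Aux3
section Aux4
open Classical

variable {V : Type*} {G : Type*} [Group G] [MulAction G V]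

lemma qmk_smul (g : G) (x : V) : qmk G (g • x) = qmk G x :=
  Quotient.sound ((MulAction.orbitRel_apply).mpr (MulAction.mem_orbit x g))

lemma qmk_exact {x y : V} (h : qmk G x = qmk G y) : ∃ g : G, g • y = x := by
  have h2 := Quotient.exact h
  exact MulAction.mem_orbit_iff.mp h2

lemma quotNu_some (ν : V → ℝ) (Ω : Finset V) (a : Quotient (MulAction.orbitRel G V)) :
    quotNu G ν Ω (some a) = ∑ x ∈ Ω, if qmk G x = a then ν x else 0 := by
  show (∑ᶠ x ∈ {z : V | z ∈ Ω ∧ qmk G z = a}, ν x) = _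
  rw [finsum_mem_eq_ite_sum' ν _ Ω (fun z hz => hz.1)]
  refine Finset.sum_congr rfl fun x hx => ?_
  by_cases h : qmk G x = a <;> simp [h, hx]

lemma quotMu_some_none (μ : V → V → ℝ) (Ω : Finset V)
    (a : Quotient (MulAction.orbitRel G V)) :
    quotMu G μ Ω (some a) none = ∑ x ∈ Ω, if qmk G x = a then outw μ Ω x else 0 := by
  show (∑ᶠ x ∈ {z : V | z ∈ Ω ∧ qmk G z = a}, ∑ᶠ y ∈ {z : V | z ∉ Ω}, μ x y) = _
  rw [finsum_mem_eq_ite_sum' _ _ Ω (fun z hz => hz.1)]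
  refine Finset.sum_congr rfl fun x hx => ?_
  by_cases h : qmk G x = a <;> simp [h, hx, outw]

lemma quotMu_some_some (μ : V → V → ℝ) (Ω : Finset V)
    {a b : Quotient (MulAction.orbitRel G V)} (hab : a ≠ b) :
    quotMu G μ Ω (some a) (some b)
      = ∑ x ∈ Ω, ∑ y ∈ Ω, if qmk G x = a ∧ qmk G y = b then μ x y else 0 := by
  show (if a = b then 0 else ∑ᶠ x ∈ {z : V | z ∈ Ω ∧ qmk G z = a},
      ∑ᶠ y ∈ {z : V | z ∈ Ω ∧ qmk G z = b}, μ x y) = _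
  rw [if_neg hab, finsum_mem_eq_ite_sum' _ _ Ω (fun z hz => hz.1)]
  refine Finset.sum_congr rfl fun x hx => ?_
  rw [finsum_mem_eq_ite_sum' (μ x) _ Ω (fun z hz => hz.1)]
  by_cases h : qmk G x = a
  · simp only [h, hx, and_self, if_true]
    refine Finset.sum_congr rfl fun y hy => ?_
    by_cases h2 : qmk G y = b <;> simp [h, h2, hy]
  · rw [if_neg (by simp [h])]
    exact (Finset.sum_eq_zero fun y _ => by simp [h]).symm

lemma sum_image_ite {α β : Type*} (s : Finset α) (f : α → β) (h : α → ℝ) :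
    ∑ q ∈ s.image f, ∑ x ∈ s, (if f x = q then h x else 0) = ∑ x ∈ s, h x := by
  rw [← Finset.sum_fiberwise_of_maps_to (fun x hx => Finset.mem_image_of_mem f hx) h]
  refine Finset.sum_congr rfl fun q _ => ?_
  rw [Finset.sum_filter]

end Aux4
section Aux5
open Classical

variable {V : Type*} {G : Type*} [Group G] [MulAction G V]

lemma quotOmega_eq (Ω : Finset V) :
    quotOmega G Ω = Ω.image (fun x => some (qmk G x)) := rfl

lemma sum_over_quot {Ω W : Finset V} (hWΩ : W ⊆ Ω)
    (hsat : ∀ g : G, ∀ x ∈ W, g • x ∈ W) (h : V → ℝ) :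
    ∑ q ∈ W.image (fun x => some (qmk G x)), ∑ x ∈ Ω,
        (if some (qmk G x) = q then h x else 0)
      = ∑ x ∈ W, h x := by
  have hstep : ∀ q ∈ W.image (fun x => some (qmk G x)),
      ∑ x ∈ Ω, (if some (qmk G x) = q then h x else 0)
        = ∑ x ∈ W, (if some (qmk G x) = q then h x else 0) := by
    intro q hq
    obtain ⟨w, hw, rfl⟩ := Finset.mem_image.mp hq
    symm
    apply Finset.sum_subset hWΩ
    intro x hxΩ hxW
    by_cases hfx : some (qmk G x) = some (qmk G w)
    · obtain ⟨g, rfl⟩ := qmk_exact (Option.some_injective _ hfx)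
      exact absurd (hsat g w hw) hxW
    · simp [hfx]
  rw [Finset.sum_congr rfl hstep, ← sum_image_ite W (fun x => some (qmk G x)) h]
  refine Finset.sum_congr (by ext q; simp) fun q _ => Finset.sum_congr rfl fun x _ => ?_
  by_cases hc : some (qmk G x) = q <;> simp [hc]

lemma quot_nu_sum (ν : V → ℝ) {Ω W : Finset V} (hWΩ : W ⊆ Ω)
    (hsat : ∀ g : G, ∀ x ∈ W, g • x ∈ W) :
    ∑ q ∈ W.image (fun x => some (qmk G x)), quotNu G ν Ω q = ∑ x ∈ W, ν x := by
  rw [← sum_over_quot hWΩ hsat ν]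
  refine Finset.sum_congr rfl fun q hq => ?_
  obtain ⟨w, hw, rfl⟩ := Finset.mem_image.mp hq
  rw [quotNu_some]
  refine Finset.sum_congr rfl fun x _ => ?_
  by_cases h : qmk G x = qmk G w
  · simp [h]
  · rw [if_neg h, if_neg (fun hc => h (Option.some_injective _ hc))]

lemma exists_sat {μ : V → V → ℝ} {ν : V → ℝ} {Ω : Finset V} (hact : IsDAutAction G μ ν Ω)
    {Uq : Finset (Option (Quotient (MulAction.orbitRel G V)))}
    (hsub : Uq ⊆ quotOmega G Ω) (hne : Uq.Nonempty) :
    ∃ W : Finset V, W ⊆ Ω ∧ W.Nonempty ∧ (∀ g : G, ∀ x ∈ W, g • x ∈ W) ∧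
      W.image (fun x => some (qmk G x)) = Uq := by
  refine ⟨Ω.filter (fun x => some (qmk G x) ∈ Uq), Finset.filter_subset _ _, ?_, ?_, ?_⟩
  · obtain ⟨q, hq⟩ := hne
    have hq2 := hsub hq
    rw [quotOmega_eq] at hq2
    obtain ⟨x, hx, rfl⟩ := Finset.mem_image.mp hq2
    exact ⟨x, Finset.mem_filter.mpr ⟨hx, hq⟩⟩
  · intro g x hx
    obtain ⟨hxΩ, hxq⟩ := Finset.mem_filter.mp hx
    refine Finset.mem_filter.mpr ⟨hact.1 g x hxΩ, ?_⟩
    rw [qmk_smul]; exact hxq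
  · apply Finset.Subset.antisymm
    · intro q hq
      obtain ⟨x, hx, rfl⟩ := Finset.mem_image.mp hq
      exact (Finset.mem_filter.mp hx).2
    · intro q hq
      have hq2 := hsub hq
      rw [quotOmega_eq] at hq2
      obtain ⟨x, hx, rfl⟩ := Finset.mem_image.mp hq2
      exact Finset.mem_image_of_mem _ (Finset.mem_filter.mpr ⟨hx, hq⟩)

end Aux5
section Aux6
open Classical

variable {V : Type*} {G : Type*} [Group G] [MulAction G V]

lemma quot_bdry {μ : V → V → ℝ} {ν : V → ℝ} {Ω : Finset V} (hG : IsWeightedGraph μ ν)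
    {W : Finset V} (hWΩ : W ⊆ Ω) (hsat : ∀ g : G, ∀ x ∈ W, g • x ∈ W) :
    bdryWt (quotMu G μ Ω) (W.image (fun x => some (qmk G x))) = bdryWt μ W := by
  rw [bdry_eq' hG hWΩ,
    ← sum_over_quot hWΩ hsat (fun x => outw μ Ω x + ∑ y ∈ Ω, if y ∈ W then 0 else μ x y)]
  unfold bdryWt
  refine Finset.sum_congr rfl fun q hq => ?_
  obtain ⟨w, hw, rfl⟩ := Finset.mem_image.mp hq
  -- support of quotMu row
  have hwΩ : w ∈ Ω := hWΩ hw
  have hsupp : Function.support (quotMu G μ Ω (some (qmk G w)))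
      ⊆ ↑(insert none (quotOmega G Ω)) := by
    intro q' hq'
    simp only [Function.mem_support] at hq'
    match q' with
    | none => simp
    | some b =>
      simp only [Finset.coe_insert, Set.mem_insert_iff, Finset.mem_coe]
      right
      by_contra hb
      apply hq'
      by_cases hab : qmk G w = b
      · show (if qmk G w = b then 0 else _) = 0
        rw [if_pos hab]
      · rw [quotMu_some_some μ Ω hab]
        refine Finset.sum_eq_zero fun x _ => Finset.sum_eq_zero fun y hy => ?_
        have hnc : ¬ (qmk G x = qmk G w ∧ qmk G y = b) := by
          rintro ⟨_, h2⟩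
          refine hb ?_
          rw [quotOmega_eq]
          exact h2 ▸ Finset.mem_image_of_mem (fun z => some (qmk G z)) hy
        simp [hnc]
  rw [finsum_mem_eq_ite_sum _ _ _ hsupp]
  have hnoneΩ : none ∉ quotOmega G Ω := by
    rw [quotOmega_eq]; simp
  rw [Finset.sum_insert hnoneΩ]
  have hnoneW : (none : Option (Quotient (MulAction.orbitRel G V)))
      ∉ W.image (fun x => some (qmk G x)) := by simp
  rw [if_pos (by exact hnoneW)]
  -- split the right-hand side
  have hsplit : (∑ x ∈ Ω, if some (qmk G x) = some (qmk G w) then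
        (outw μ Ω x + ∑ y ∈ Ω, if y ∈ W then 0 else μ x y) else 0)
      = (∑ x ∈ Ω, if some (qmk G x) = some (qmk G w) then outw μ Ω x else 0)
        + ∑ x ∈ Ω, if some (qmk G x) = some (qmk G w) then
            (∑ y ∈ Ω, if y ∈ W then 0 else μ x y) else 0 := by
    rw [← Finset.sum_add_distrib]
    refine Finset.sum_congr rfl fun x _ => ?_
    by_cases hx : some (qmk G x) = some (qmk G w) <;> simp [hx]
  rw [hsplit]
  congr 1
  · -- boundary-to-complement part
    rw [quotMu_some_none μ Ω (qmk G w)]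
    refine Finset.sum_congr rfl fun x _ => ?_
    by_cases h : qmk G x = qmk G w
    · simp [h]
    · rw [if_neg h, if_neg (fun hc => h (Option.some_injective _ hc))]
  · -- interior part
    have hinner : ∀ x ∈ Ω, (∑ y ∈ Ω, if y ∈ W then 0 else μ x y)
        = ∑ q' ∈ quotOmega G Ω, ∑ y ∈ Ω,
            (if some (qmk G y) = q' then (if y ∈ W then 0 else μ x y) else 0) := by
      intro x _
      rw [quotOmega_eq]
      rw [← sum_image_ite Ω (fun z => some (qmk G z)) (fun y => if y ∈ W then 0 else μ x y)]
      refine Finset.sum_congr (by ext q'; simp) fun q' _ => Finset.sum_congr rfl fun y _ => ?_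
      by_cases hc : some (qmk G y) = q' <;> simp [hc]
    trans (∑ q' ∈ quotOmega G Ω, ∑ x ∈ Ω, (if some (qmk G x) = some (qmk G w) then
            (∑ y ∈ Ω, if some (qmk G y) = q' then (if y ∈ W then 0 else μ x y) else 0) else 0))
    · refine Finset.sum_congr rfl fun q' hq' => ?_
      rw [quotOmega_eq] at hq'
      obtain ⟨v, hv, rfl⟩ := Finset.mem_image.mp hq'
      by_cases hq'W : some (qmk G v) ∈ W.image (fun x => some (qmk G x))
      · simp only [hq'W, not_true, if_false]
        symm
        refine Finset.sum_eq_zero fun x _ => ?_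
        have hzero : (∑ y ∈ Ω, if some (qmk G y) = some (qmk G v) then
            (if y ∈ W then 0 else μ x y) else 0) = 0 := by
          refine Finset.sum_eq_zero fun y _ => ?_
          by_cases hy : some (qmk G y) = some (qmk G v)
          · obtain ⟨w', hw', hw'v⟩ := Finset.mem_image.mp hq'W
            have hyw' : qmk G y = qmk G w' :=
              Option.some_injective _ (hy.trans hw'v.symm)
            obtain ⟨g, rfl⟩ := qmk_exact hyw'
            simp [hy, hsat g w' hw']
          · simp [hy]
        rw [hzero]
        simp
      · simp only [hq'W, not_false_iff, if_true]
        have hvw : qmk G w ≠ qmk G v := by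
          intro h
          exact hq'W (h ▸ Finset.mem_image_of_mem _ hw)
        rw [quotMu_some_some μ Ω hvw]
        refine Finset.sum_congr rfl fun x _ => ?_
        by_cases hx : qmk G x = qmk G w
        · rw [if_pos (by rw [hx])]
          refine Finset.sum_congr rfl fun y _ => ?_
          by_cases hy : qmk G y = qmk G v
          · have hyW : y ∉ W := by
              intro hyW
              exact hq'W (hy ▸ Finset.mem_image_of_mem (fun z => some (qmk G z)) hyW)
            simp [hx, hy, hyW]
          · rw [if_neg (by simp [hx, hy]), if_neg (fun hc => hy (Option.some_injective _ hc))]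
        · rw [if_neg (fun hc => hx (Option.some_injective _ hc))]
          exact Finset.sum_eq_zero fun y _ => by simp [hx]
    · rw [Finset.sum_comm]
      refine Finset.sum_congr rfl fun x hx => ?_
      by_cases hc : some (qmk G x) = some (qmk G w)
      · simp only [hc, if_true]
        exact (hinner x hx).symm
      · simp [hc]

end Aux6
section Aux7

lemma sup_closed {V : Type*} [DecidableEq V] (P : Finset V → Prop)
    (hP : ∀ A B, P A → P B → P (A ∪ B)) :
    ∀ 𝒢 : Finset (Finset V), 𝒢.Nonempty → (∀ A ∈ 𝒢, P A) → P (𝒢.sup id) := by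
  intro 𝒢
  induction 𝒢 using Finset.induction_on with
  | empty => intro hne _; exact absurd hne (by simp)
  | @insert A s hA ih =>
    intro _ hall
    rw [Finset.sup_insert]
    rcases s.eq_empty_or_nonempty with rfl | hs
    · simpa using hall A (Finset.mem_insert_self A _)
    · have h1 : P A := hall A (Finset.mem_insert_self A s)
      have h2 : P (s.sup id) := ih hs fun B hB => hall B (Finset.mem_insert_of_mem hB)
      have := hP A (s.sup id) h1 h2
      simpa [Finset.sup_eq_union] using this

end Aux7
/-- for a finite connected subset `Ω` and a group `Γ` of Dirichlet
automorphisms of `Ω` acting finitely (all orbits finite), the Dirichlet Cheeger constant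
of `Ω` equals that of the quotient graph: `h_{μ,ν}(Ω) = h_{μ,ν}(Ω/Γ)`. -/
theorem cheeger_quotient {V : Type*} {μ : V → V → ℝ} {ν : V → ℝ}
    (hG : IsWeightedGraph μ ν) {Ω : Finset V} (hconn : ConnOn μ Ω)
    (G : Type*) [Group G] [MulAction G V] (hact : IsDAutAction G μ ν Ω)
    (hfin : ∀ x : V, (MulAction.orbit G x).Finite) :
    cheeger μ ν Ω = cheeger (quotMu G μ Ω) (quotNu G ν Ω) (quotOmega G Ω) := by
  classical
  unfold cheeger
  rcases Ω.eq_empty_or_nonempty with hΩe | hΩne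
  · subst hΩe
    have h1 : {t : ℝ | ∃ U : Finset V, U ⊆ (∅ : Finset V) ∧ U.Nonempty ∧
        t = bdryWt μ U / ∑ x ∈ U, ν x} = ∅ := by
      ext t
      simp only [Set.mem_setOf_eq, Set.mem_empty_iff_false, iff_false, not_exists]
      rintro U ⟨hU, ⟨x, hx⟩, _⟩
      exact Finset.notMem_empty x (hU hx)
    have h2 : {t : ℝ | ∃ U : Finset (Option (Quotient (MulAction.orbitRel G V))),
        U ⊆ quotOmega G (∅ : Finset V) ∧ U.Nonempty ∧
        t = bdryWt (quotMu G μ (∅ : Finset V)) U / ∑ x ∈ U, quotNu G ν (∅ : Finset V) x}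
        = ∅ := by
      ext t
      simp only [Set.mem_setOf_eq, Set.mem_empty_iff_false, iff_false, not_exists]
      rintro U ⟨hU, ⟨q, hq⟩, _⟩
      have := hU hq
      rw [quotOmega_eq, Finset.image_empty] at this
      exact Finset.notMem_empty q this
    rw [h1, h2]
  · set S := {t : ℝ | ∃ U : Finset V, U ⊆ Ω ∧ U.Nonempty ∧
      t = bdryWt μ U / ∑ x ∈ U, ν x} with hSdef
    set SQ := {t : ℝ | ∃ U : Finset (Option (Quotient (MulAction.orbitRel G V))),
      U ⊆ quotOmega G Ω ∧ U.Nonempty ∧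
      t = bdryWt (quotMu G μ Ω) U / ∑ x ∈ U, quotNu G ν Ω x} with hSQdef
    show sInf S = sInf SQ
    have hnusum_pos : ∀ {U : Finset V}, U.Nonempty → 0 < ∑ x ∈ U, ν x := fun hU =>
      Finset.sum_pos (fun x _ => hG.nuPos x) hU
    have hbdd : BddBelow S := by
      refine ⟨0, ?_⟩
      rintro t ⟨U, hUΩ, hUne, rfl⟩
      exact div_nonneg (bdry_nonneg hG hUΩ) (le_of_lt (hnusum_pos hUne))
    have hSfin : S.Finite := by
      apply Set.Finite.subset (Set.Finite.image (fun U : Finset V => bdryWt μ U / ∑ x ∈ U, ν x)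
        Ω.powerset.finite_toSet)
      rintro t ⟨U, hUΩ, _, rfl⟩
      exact ⟨U, by simpa using hUΩ, rfl⟩
    have hSne : S.Nonempty := ⟨_, Ω, Finset.Subset.refl Ω, hΩne, rfl⟩
    obtain ⟨U₀, hU₀Ω, hU₀ne, hU₀eq⟩ := hSne.csInf_mem hSfin
    set h := sInf S with hh
    have hmins : ∀ U : Finset V, U ⊆ Ω → U.Nonempty → h * (∑ x ∈ U, ν x) ≤ bdryWt μ U := by
      intro U hUΩ hUne
      have hle : h ≤ bdryWt μ U / ∑ x ∈ U, ν x := csInf_le hbdd ⟨U, hUΩ, hUne, rfl⟩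
      exact (le_div_iff₀ (hnusum_pos hUne)).mp hle
    set P : Finset V → Prop := fun A => A ⊆ Ω ∧ A.Nonempty ∧
      bdryWt μ A = h * ∑ x ∈ A, ν x with hPdef
    have hPU₀ : P U₀ :=
      ⟨hU₀Ω, hU₀ne, ((eq_div_iff (ne_of_gt (hnusum_pos hU₀ne))).mp hU₀eq).symm⟩
    have hPunion : ∀ A B, P A → P B → P (A ∪ B) := by
      rintro A B ⟨hAΩ, hAne, hAeq⟩ ⟨hBΩ, hBne, hBeq⟩
      have hUΩ : A ∪ B ⊆ Ω := Finset.union_subset hAΩ hBΩ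
      have hIΩ : A ∩ B ⊆ Ω := fun x hx => hAΩ (Finset.mem_inter.mp hx).1
      have hUne : (A ∪ B).Nonempty := hAne.mono Finset.subset_union_left
      refine ⟨hUΩ, hUne, ?_⟩
      have hsub := crossw_submod hG Ω A B
      have hout : (∑ x ∈ A ∪ B, outw μ Ω x) + ∑ x ∈ A ∩ B, outw μ Ω x
          = (∑ x ∈ A, outw μ Ω x) + ∑ x ∈ B, outw μ Ω x := Finset.sum_union_inter
      have hnu : ((∑ x ∈ A ∪ B, ν x) + ∑ x ∈ A ∩ B, ν x)
          = (∑ x ∈ A, ν x) + ∑ x ∈ B, ν x := Finset.sum_union_inter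
      have hnu' : h * (∑ x ∈ A ∪ B, ν x) + h * (∑ x ∈ A ∩ B, ν x)
          = h * (∑ x ∈ A, ν x) + h * (∑ x ∈ B, ν x) := by
        rw [← mul_add, ← mul_add, hnu]
      have hBd : bdryWt μ (A ∪ B) + bdryWt μ (A ∩ B) ≤ bdryWt μ A + bdryWt μ B := by
        rw [bdry_eq hG hUΩ, bdry_eq hG hIΩ, bdry_eq hG hAΩ, bdry_eq hG hBΩ]
        linarith
      have hI : h * (∑ x ∈ A ∩ B, ν x) ≤ bdryWt μ (A ∩ B) := by
        rcases (A ∩ B).eq_empty_or_nonempty with hie | hine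
        · rw [hie]; simp [bdryWt]
        · exact hmins _ hIΩ hine
      have hU : h * (∑ x ∈ A ∪ B, ν x) ≤ bdryWt μ (A ∪ B) := hmins _ hUΩ hUne
      linarith
    set f : V → Option (Quotient (MulAction.orbitRel G V)) :=
      fun x => some (qmk G x) with hfdef
    set 𝒢 : Finset (Finset V) :=
      Ω.powerset.filter (fun A => ∃ g : G, A = U₀.image (g • ·)) with h𝒢
    have h𝒢P : ∀ A ∈ 𝒢, P A := by
      intro A hA
      rw [h𝒢, Finset.mem_filter, Finset.mem_powerset] at hA
      obtain ⟨hAΩ, g, rfl⟩ := hA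
      exact ⟨smul_image_subset hact hU₀Ω g, hU₀ne.image _,
        by rw [bdry_smul hG hact hU₀Ω g, nusum_smul hact hU₀Ω g, hPU₀.2.2]⟩
    have hU₀𝒢 : U₀ ∈ 𝒢 := by
      rw [h𝒢, Finset.mem_filter, Finset.mem_powerset]
      refine ⟨hU₀Ω, 1, ?_⟩
      have : ((1 : G) • ·) = (id : V → V) := by funext x; simp
      rw [this, Finset.image_id]
    set W := 𝒢.sup id with hW
    have hPW : P W := sup_closed P hPunion 𝒢 ⟨U₀, hU₀𝒢⟩ h𝒢P
    have hsatW : ∀ g : G, ∀ x ∈ W, g • x ∈ W := by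
      intro g x hx
      rw [hW, Finset.mem_sup] at hx ⊢
      obtain ⟨A, hA𝒢, hxA⟩ := hx
      rw [h𝒢, Finset.mem_filter, Finset.mem_powerset] at hA𝒢
      obtain ⟨hAΩ, g₀, rfl⟩ := hA𝒢
      obtain ⟨u, hu, rfl⟩ := Finset.mem_image.mp hxA
      refine ⟨U₀.image ((g * g₀) • ·), ?_, ?_⟩
      · rw [h𝒢, Finset.mem_filter, Finset.mem_powerset]
        exact ⟨smul_image_subset hact hU₀Ω (g * g₀), (g * g₀), rfl⟩
      · show g • g₀ • u ∈ id (U₀.image ((g * g₀) • ·))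
        rw [← mul_smul]
        exact Finset.mem_image_of_mem _ hu
    have hWΩ : W ⊆ Ω := hPW.1
    have hWne : W.Nonempty := hPW.2.1
    have hWQsub : W.image f ⊆ quotOmega G Ω := by
      rw [quotOmega_eq, hfdef]
      exact Finset.image_subset_image hWΩ
    have hνW := hnusum_pos hWne
    have hmemSQ : h ∈ SQ := by
      refine ⟨W.image f, hWQsub, hWne.image f, ?_⟩
      rw [hfdef, quot_bdry hG hWΩ hsatW, quot_nu_sum ν hWΩ hsatW, hPW.2.2]
      exact (mul_div_cancel_right₀ h (ne_of_gt hνW)).symm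
    have hSQsub : SQ ⊆ S := by
      rintro t ⟨Uq, hUq, hUqne, rfl⟩
      obtain ⟨W', hW'Ω, hW'ne, hsat', him⟩ := exists_sat hact hUq hUqne
      refine ⟨W', hW'Ω, hW'ne, ?_⟩
      rw [← him, quot_bdry hG hW'Ω hsat', quot_nu_sum ν hW'Ω hsat']
    exact le_antisymm (csInf_le_csInf hbdd ⟨h, hmemSQ⟩ hSQsub) (csInf_le (hbdd.mono hSQsub) hmemSQ)

end PGraph
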